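/- arXiv:2509.01478 — 5 statements merged into one kernel-verified Lean document; each statement's English description precedes it below -/
import Mathlib

section
/- Let n, d be positive integers, κ ∈ ℝ with −1 < κ < 0, and (y_i, x_i) ∈ ℝ × ℝ^d for i = 1, …, n with y_i ≥ 0 for all i. The generalized PML objective L_κ(θ) = ∑_{i=1}^n ((1/κ)·y_i·exp(κ·θᵀx_i) − (1/(κ+1))·exp((κ+1)·θᵀx_i)) is a concave function of θ on ℝ^d. -/
open Real RealInnerProductSpace

/-! Each summand is a concave function of the scalar `t = ⟪θ, x i⟫`: it is `y i / κ ≤ 0` times the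
convex `exp (κ t)` minus `1 / (κ + 1) > 0` times the convex `exp ((κ + 1) t)`. Concavity survives
precomposition with the linear form `θ ↦ ⟪θ, x i⟫` and finite sums. -/

theorem ConcaveOn.finset_sum {𝕜 E β ι : Type*} [Semiring 𝕜] [PartialOrder 𝕜]
    [AddCommMonoid E] [AddCommMonoid β] [PartialOrder β] [IsOrderedAddMonoid β]
    [SMul 𝕜 E] [Module 𝕜 β] {s : Set E} (hs : Convex 𝕜 s) (t : Finset ι)
    {f : ι → E → β} (hf : ∀ i ∈ t, ConcaveOn 𝕜 s (f i)) :
    ConcaveOn 𝕜 s (fun x => ∑ i ∈ t, f i x) := by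
  simpa only [← Finset.sum_apply] using
    Finset.sum_induction f (ConcaveOn 𝕜 s) (fun _ _ => ConcaveOn.add)
      (concaveOn_const (0 : β) hs) hf

theorem convexOn_exp_mul (c : ℝ) : ConvexOn ℝ Set.univ fun t => exp (c * t) :=
  convexOn_exp.comp_linearMap (LinearMap.mul ℝ ℝ c)

theorem ConcaveOn.comp_inner_right {E : Type*} [NormedAddCommGroup E] [InnerProductSpace ℝ E]
    {g : ℝ → ℝ} (hg : ConcaveOn ℝ Set.univ g) (v : E) :
    ConcaveOn ℝ Set.univ fun θ => g ⟪θ, v⟫ :=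
  hg.comp_linearMap (innerSLFlip ℝ v : E →L[ℝ] ℝ).toLinearMap

theorem concaveOn_pml_summand {κ : ℝ} (hκ1 : -1 < κ) (hκ0 : κ < 0) {y : ℝ} (hy : 0 ≤ y) :
    ConcaveOn ℝ Set.univ fun t =>
      (1 / κ) * y * exp (κ * t) - (1 / (κ + 1)) * exp ((κ + 1) * t) := by
  have hyκ : 0 ≤ -(1 / κ * y) :=
    neg_nonneg.mpr (mul_nonpos_of_nonpos_of_nonneg (one_div_neg.mpr hκ0).le hy)
  have hκ1' : 0 ≤ 1 / (κ + 1) := one_div_nonneg.mpr (by linarith)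
  have hfirst : ConcaveOn ℝ Set.univ fun t => (1 / κ) * y * exp (κ * t) := by
    simpa only [Pi.neg_def, smul_eq_mul, neg_mul, neg_neg] using
      ((convexOn_exp_mul κ).smul hyκ).neg
  exact hfirst.sub ((convexOn_exp_mul (κ + 1)).smul hκ1')

theorem generalized_pml_concave_general (n d : ℕ)
    (κ : ℝ) (hκ1 : -1 < κ) (hκ0 : κ < 0)
    (y : Fin n → ℝ) (hy : ∀ i, 0 ≤ y i) (x : Fin n → EuclideanSpace ℝ (Fin d)) :
    ConcaveOn ℝ Set.univ (fun θ : EuclideanSpace ℝ (Fin d) =>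
      ∑ i, ((1 / κ) * y i * Real.exp (κ * ⟪θ, x i⟫)
        - (1 / (κ + 1)) * Real.exp ((κ + 1) * ⟪θ, x i⟫))) :=
  ConcaveOn.finset_sum convex_univ _ fun i _ =>
    (concaveOn_pml_summand hκ1 hκ0 (hy i)).comp_inner_right (x i)

/-- For `-1 < κ < 0` and `y i ≥ 0` for all `i`, the generalized PML objective
`L_κ(θ) = ∑ i, ((1/κ) * y i * exp (κ * ⟪θ, x i⟫) - (1/(κ+1)) * exp ((κ+1) * ⟪θ, x i⟫))`
is concave on `ℝ^d`. -/
theorem generalized_pml_concave (n d : ℕ) (hn : 0 < n) (hd : 0 < d)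
    (κ : ℝ) (hκ1 : -1 < κ) (hκ0 : κ < 0)
    (y : Fin n → ℝ) (hy : ∀ i, 0 ≤ y i) (x : Fin n → EuclideanSpace ℝ (Fin d)) :
    ConcaveOn ℝ Set.univ (fun θ : EuclideanSpace ℝ (Fin d) =>
      ∑ i, ((1 / κ) * y i * Real.exp (κ * ⟪θ, x i⟫)
        - (1 / (κ + 1)) * Real.exp ((κ + 1) * ⟪θ, x i⟫))) :=
  generalized_pml_concave_general n d κ hκ1 hκ0 y hy x
end

section
/- Let n be a positive integer, κ ∈ ℝ with −1 < κ < 0, and let (y_i, x_i) ∈ ℝ × ℝ for i = 1, …, n satisfy y_i ≥ 0 for all i, x_i > 0 for at least one i, and x_j < 0 for at least one j. Then the one-dimensional generalized PML objective L_κ(θ) = ∑_{i=1}^n ((1/κ)·y_i·exp(κ·θ·x_i) − (1/(κ+1))·exp((κ+1)·θ·x_i)) tends to −∞ as θ → +∞ and as θ → −∞; in particular, L_κ attains its maximum at some θ* ∈ ℝ. -/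
open Real Filter

lemma pml_aux (n : ℕ) (κ : ℝ) (hκ1 : -1 < κ) (hκ0 : κ < 0)
    (y x : Fin n → ℝ) (hy : ∀ i, 0 ≤ y i) (i₀ : Fin n) (s : ℝ) (hs : 0 < s * x i₀) :
    Tendsto (fun θ : ℝ => ∑ i, ((1 / κ) * y i * Real.exp (κ * (θ * x i))
        - (1 / (κ + 1)) * Real.exp ((κ + 1) * (θ * x i)))) (if 0 < s then atTop else atBot)
      atBot := by
  have hκ1' : 0 < κ + 1 := by linarith
  have hterm : ∀ (i : Fin n) (θ : ℝ),
      (1 / κ) * y i * Real.exp (κ * (θ * x i))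
        - (1 / (κ + 1)) * Real.exp ((κ + 1) * (θ * x i)) ≤
      -((1 / (κ + 1)) * Real.exp ((κ + 1) * (θ * x i))) := by
    intro i θ
    have h1 : (1 / κ) * y i * Real.exp (κ * (θ * x i)) ≤ 0 := by
      apply mul_nonpos_of_nonpos_of_nonneg
      · exact mul_nonpos_of_nonpos_of_nonneg
          (div_nonpos_of_nonneg_of_nonpos zero_le_one hκ0.le) (hy i)
      · exact (Real.exp_pos _).le
    linarith
  have hbound : ∀ θ : ℝ,
      (∑ i, ((1 / κ) * y i * Real.exp (κ * (θ * x i))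
        - (1 / (κ + 1)) * Real.exp ((κ + 1) * (θ * x i)))) ≤
      -((1 / (κ + 1)) * Real.exp ((κ + 1) * (θ * x i₀))) := by
    intro θ
    calc (∑ i, ((1 / κ) * y i * Real.exp (κ * (θ * x i))
        - (1 / (κ + 1)) * Real.exp ((κ + 1) * (θ * x i))))
        = ((1 / κ) * y i₀ * Real.exp (κ * (θ * x i₀))
            - (1 / (κ + 1)) * Real.exp ((κ + 1) * (θ * x i₀)))
          + ∑ i ∈ Finset.univ.erase i₀, ((1 / κ) * y i * Real.exp (κ * (θ * x i))
            - (1 / (κ + 1)) * Real.exp ((κ + 1) * (θ * x i))) :=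
          (Finset.add_sum_erase _ _ (Finset.mem_univ i₀)).symm
      _ ≤ ((1 / κ) * y i₀ * Real.exp (κ * (θ * x i₀))
            - (1 / (κ + 1)) * Real.exp ((κ + 1) * (θ * x i₀))) + 0 := by
          gcongr _ + ?_
          apply Finset.sum_nonpos
          intro i _
          refine (hterm i θ).trans ?_
          have : 0 < (1 / (κ + 1)) * Real.exp ((κ + 1) * (θ * x i)) := by positivity
          linarith
      _ = (1 / κ) * y i₀ * Real.exp (κ * (θ * x i₀))
            - (1 / (κ + 1)) * Real.exp ((κ + 1) * (θ * x i₀)) := add_zero _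
      _ ≤ _ := hterm i₀ θ
  refine tendsto_atBot_mono hbound ?_
  have hlim : Tendsto (fun θ : ℝ => (1 / (κ + 1)) * Real.exp ((κ + 1) * (θ * x i₀)))
      (if 0 < s then atTop else atBot) atTop := by
    apply Tendsto.const_mul_atTop (by positivity)
    apply Real.tendsto_exp_atTop.comp
    have : Tendsto (fun θ : ℝ => θ * ((κ + 1) * x i₀)) (if 0 < s then atTop else atBot) atTop := by
      rcases lt_or_ge 0 s with h | h
      · rw [if_pos h]
        have hx : 0 < x i₀ := by nlinarith
        exact Tendsto.atTop_mul_const (by positivity) tendsto_id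
      · rw [if_neg (not_lt.mpr h)]
        have hs' : s < 0 := by
          rcases lt_or_eq_of_le h with h' | h'
          · exact h'
          · exact absurd hs (by rw [h']; simp)
        have hx : x i₀ < 0 := by nlinarith
        exact Tendsto.atBot_mul_const_of_neg (by nlinarith) tendsto_id
    convert this using 2 with θ; ring
  exact (tendsto_neg_atBot_iff.mpr hlim)

/-- For `-1 < κ < 0`, scalar data with `y i ≥ 0`, at least one positive
covariate and at least one negative covariate, the one-dimensional generalized PML objective
`L_κ(θ) = ∑ i, ((1/κ) * y i * exp (κ * θ * x i) - (1/(κ+1)) * exp ((κ+1) * θ * x i))`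
tends to `-∞` as `θ → +∞` and as `θ → -∞`; in particular it attains its maximum. -/
theorem generalized_pml_coercive_attains_max (n : ℕ) (hn : 0 < n)
    (κ : ℝ) (hκ1 : -1 < κ) (hκ0 : κ < 0)
    (y x : Fin n → ℝ) (hy : ∀ i, 0 ≤ y i)
    (hpos : ∃ i, 0 < x i) (hneg : ∃ j, x j < 0) :
    Tendsto (fun θ : ℝ => ∑ i, ((1 / κ) * y i * Real.exp (κ * (θ * x i))
        - (1 / (κ + 1)) * Real.exp ((κ + 1) * (θ * x i)))) atTop atBot ∧
    Tendsto (fun θ : ℝ => ∑ i, ((1 / κ) * y i * Real.exp (κ * (θ * x i))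
        - (1 / (κ + 1)) * Real.exp ((κ + 1) * (θ * x i)))) atBot atBot ∧
    ∃ θs : ℝ, ∀ θ : ℝ,
      ∑ i, ((1 / κ) * y i * Real.exp (κ * (θ * x i))
        - (1 / (κ + 1)) * Real.exp ((κ + 1) * (θ * x i)))
      ≤ ∑ i, ((1 / κ) * y i * Real.exp (κ * (θs * x i))
        - (1 / (κ + 1)) * Real.exp ((κ + 1) * (θs * x i))) := by
  obtain ⟨i₀, hi₀⟩ := hpos
  obtain ⟨j₀, hj₀⟩ := hneg
  have htop := pml_aux n κ hκ1 hκ0 y x hy i₀ 1 (by simpa using hi₀)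
  have hbot := pml_aux n κ hκ1 hκ0 y x hy j₀ (-1) (by nlinarith)
  rw [if_pos one_pos] at htop
  rw [if_neg (by norm_num)] at hbot
  refine ⟨htop, hbot, ?_⟩
  have hcont : Continuous (fun θ : ℝ => ∑ i, ((1 / κ) * y i * Real.exp (κ * (θ * x i))
        - (1 / (κ + 1)) * Real.exp ((κ + 1) * (θ * x i)))) := by
    apply continuous_finset_sum
    intro i _
    fun_prop
  apply hcont.exists_forall_ge
  rw [cocompact_eq_atBot_atTop]
  exact tendsto_sup.mpr ⟨hbot, htop⟩
end

section
/- Let n be a positive integer, κ > 0 a real number, and let (y_i, x_i) ∈ ℝ × ℝ for i = 1, …, n satisfy y_i ≥ 0 for all i, x_i > 0 for at least one i, and x_j < 0 for at least one j. Define g(θ) = ∑_{i=1}^n (y_i − exp(θ·x_i))·exp(κ·θ·x_i)·x_i for θ ∈ ℝ. Then g is continuous, g(θ) → −∞ as θ → +∞, and g(θ) → +∞ as θ → −∞; in particular, g has a root, and the set of roots of g is bounded. -/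
open Real Filter

/-!
Each summand is `φ(θ x_i) x_i` with `φ(t) = (y_i - eᵗ) e^{κt}`, and `φ(t) → -∞` as `t → +∞`
while `φ(t) → 0` as `t → -∞` (this is where `κ > 0` enters). As `θ → +∞` the summands with
`x_i > 0` therefore tend to `-∞` and all others stay bounded above, so `g → -∞`; the limit at
`-∞` is the same statement for the data `-x`, since `g` changes sign under `(θ, x) ↦ (-θ, -x)`.
A continuous function with these limits has a root, and its level sets avoid neighbourhoods of
both infinities, hence are bounded.
-/

theorem Filter.Tendsto.sum_atBot_of_isBoundedUnder_le {ι α G : Type*} [AddCommGroup G]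
    [PartialOrder G] [IsOrderedAddMonoid G] {l : Filter α} {s : Finset ι} {f : ι → α → G}
    {i₀ : ι} (hi₀ : i₀ ∈ s) (h₀ : Tendsto (f i₀) l atBot)
    (hbdd : ∀ i ∈ s, IsBoundedUnder (· ≤ ·) l (f i)) :
    Tendsto (fun a => ∑ i ∈ s, f i a) l atBot := by
  classical
  obtain ⟨C, hC⟩ :=
    isBoundedUnder_le_sum (s.erase i₀) fun i hi => hbdd i (Finset.mem_of_mem_erase hi)
  simp_rw [← Finset.add_sum_erase s _ hi₀, add_comm (f i₀ _)]
  refine tendsto_atBot_add_left_of_ge' l C ?_ h₀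
  simpa only [eventually_map, Finset.sum_apply] using hC

theorem Bornology.isBounded_setOf_eq_of_tendsto {α β : Type*} [Bornology α] [LinearOrder α]
    [IsOrderBornology α] [NoMaxOrder α] [NoMinOrder α] [Preorder β] [NoMaxOrder β]
    [NoMinOrder β] {f : α → β} (hTop : Tendsto f atTop atBot) (hBot : Tendsto f atBot atTop)
    (c : β) : Bornology.IsBounded {a | f a = c} := by
  rw [Bornology.isBounded_def, IsOrderBornology.cobounded_eq, mem_sup]
  exact ⟨(hBot.eventually_gt_atTop c).mono fun _ h => h.ne',
    (hTop.eventually_lt_atBot c).mono fun _ h => h.ne⟩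

section SubExpMulExp

variable {κ : ℝ} (hκ : 0 < κ) (c : ℝ)
include hκ

theorem tendsto_sub_exp_mul_exp_atTop :
    Tendsto (fun t => (c - exp t) * exp (κ * t)) atTop atBot :=
  (tendsto_atBot_add_const_left atTop c (tendsto_neg_atTop_atBot.comp tendsto_exp_atTop)
    ).atBot_mul_atTop₀ (tendsto_exp_atTop.comp (tendsto_id.const_mul_atTop hκ))

theorem tendsto_sub_exp_mul_exp_atBot :
    Tendsto (fun t => (c - exp t) * exp (κ * t)) atBot (nhds 0) := by
  simpa using (tendsto_const_nhds.sub tendsto_exp_atBot).mul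
    (tendsto_exp_atBot.comp (tendsto_id.const_mul_atBot hκ))

theorem tendsto_sub_exp_mul_exp_mul_atTop_of_pos {x : ℝ} (hx : 0 < x) :
    Tendsto (fun θ => (c - exp (θ * x)) * exp (κ * (θ * x)) * x) atTop atBot :=
  ((tendsto_sub_exp_mul_exp_atTop hκ c).comp (tendsto_id.atTop_mul_const hx)).atBot_mul_const hx

theorem isBoundedUnder_le_sub_exp_mul_exp_mul_atTop (x : ℝ) :
    IsBoundedUnder (· ≤ ·) atTop (fun θ => (c - exp (θ * x)) * exp (κ * (θ * x)) * x) := by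
  rcases lt_trichotomy x 0 with hx | rfl | hx
  · exact (((tendsto_sub_exp_mul_exp_atBot hκ c).comp
      (tendsto_id.atTop_mul_const_of_neg hx)).mul_const x).isBoundedUnder_le
  · simpa using isBoundedUnder_const
  · exact (tendsto_sub_exp_mul_exp_mul_atTop_of_pos hκ c hx).isBoundedUnder_le_atBot

end SubExpMulExp

noncomputable def pmlEstimatingFun {ι : Type*} [Fintype ι] (κ : ℝ) (y x : ι → ℝ) (θ : ℝ) : ℝ :=
  ∑ i, (y i - exp (θ * x i)) * exp (κ * (θ * x i)) * x i

namespace pmlEstimatingFun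

variable {ι : Type*} [Fintype ι] {κ : ℝ} (y : ι → ℝ) {x : ι → ℝ}

theorem continuous (κ : ℝ) (x : ι → ℝ) : Continuous (pmlEstimatingFun κ y x) := by
  unfold pmlEstimatingFun
  fun_prop

theorem apply_neg_neg (x : ι → ℝ) (θ : ℝ) :
    pmlEstimatingFun κ y (-x) (-θ) = -pmlEstimatingFun κ y x θ := by
  simp [pmlEstimatingFun, ← Finset.sum_neg_distrib]

theorem tendsto_atTop (hκ : 0 < κ) (hpos : ∃ i, 0 < x i) :
    Tendsto (pmlEstimatingFun κ y x) atTop atBot := by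
  obtain ⟨i₀, hi₀⟩ := hpos
  exact Tendsto.sum_atBot_of_isBoundedUnder_le (Finset.mem_univ i₀)
    (tendsto_sub_exp_mul_exp_mul_atTop_of_pos hκ _ hi₀)
    fun i _ => isBoundedUnder_le_sub_exp_mul_exp_mul_atTop hκ _ _

theorem tendsto_atBot (hκ : 0 < κ) (hneg : ∃ j, x j < 0) :
    Tendsto (pmlEstimatingFun κ y x) atBot atTop := by
  have h := (tendsto_atTop y (x := -x) hκ (by simpa using hneg)).comp tendsto_neg_atBot_atTop
  simpa [Function.comp_def, apply_neg_neg] using tendsto_neg_atBot_atTop.comp h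

end pmlEstimatingFun

theorem generalized_pml_estimating_function_root_general (n : ℕ)
    (κ : ℝ) (hκ : 0 < κ)
    (y x : Fin n → ℝ)
    (hpos : ∃ i, 0 < x i) (hneg : ∃ j, x j < 0) :
    Continuous (fun θ : ℝ =>
      ∑ i, (y i - Real.exp (θ * x i)) * Real.exp (κ * (θ * x i)) * x i) ∧
    Tendsto (fun θ : ℝ =>
      ∑ i, (y i - Real.exp (θ * x i)) * Real.exp (κ * (θ * x i)) * x i) atTop atBot ∧
    Tendsto (fun θ : ℝ =>
      ∑ i, (y i - Real.exp (θ * x i)) * Real.exp (κ * (θ * x i)) * x i) atBot atTop ∧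
    (∃ θ : ℝ, ∑ i, (y i - Real.exp (θ * x i)) * Real.exp (κ * (θ * x i)) * x i = 0) ∧
    Bornology.IsBounded {θ : ℝ |
      ∑ i, (y i - Real.exp (θ * x i)) * Real.exp (κ * (θ * x i)) * x i = 0} := by
  have hcont := pmlEstimatingFun.continuous y κ x
  have hTop := pmlEstimatingFun.tendsto_atTop y hκ hpos
  have hBot := pmlEstimatingFun.tendsto_atBot y hκ hneg
  exact ⟨hcont, hTop, hBot, hcont.surjective' hBot hTop 0,
    Bornology.isBounded_setOf_eq_of_tendsto hTop hBot 0⟩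

/-- For `κ > 0` and scalar data with `y i ≥ 0`, at least one positive
covariate and at least one negative covariate, the one-dimensional generalized PML
estimating function `g(θ) = ∑ i, (y i - exp (θ * x i)) * exp (κ * θ * x i) * x i` is
continuous, tends to `-∞` at `+∞` and to `+∞` at `-∞`; in particular it has a root and its
set of roots is bounded. -/
theorem generalized_pml_estimating_function_root (n : ℕ) (hn : 0 < n)
    (κ : ℝ) (hκ : 0 < κ)
    (y x : Fin n → ℝ) (hy : ∀ i, 0 ≤ y i)
    (hpos : ∃ i, 0 < x i) (hneg : ∃ j, x j < 0) :
    Continuous (fun θ : ℝ =>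
      ∑ i, (y i - Real.exp (θ * x i)) * Real.exp (κ * (θ * x i)) * x i) ∧
    Tendsto (fun θ : ℝ =>
      ∑ i, (y i - Real.exp (θ * x i)) * Real.exp (κ * (θ * x i)) * x i) atTop atBot ∧
    Tendsto (fun θ : ℝ =>
      ∑ i, (y i - Real.exp (θ * x i)) * Real.exp (κ * (θ * x i)) * x i) atBot atTop ∧
    (∃ θ : ℝ, ∑ i, (y i - Real.exp (θ * x i)) * Real.exp (κ * (θ * x i)) * x i = 0) ∧
    Bornology.IsBounded {θ : ℝ |
      ∑ i, (y i - Real.exp (θ * x i)) * Real.exp (κ * (θ * x i)) * x i = 0} :=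
  generalized_pml_estimating_function_root_general n κ hκ y x hpos hneg
end

section
/- Let μ be a measure on ℝ, and let θ₀, α ∈ ℝ. For κ ∈ ℝ define V(κ) = (∫ x²·exp((2κ+α)·θ₀·x) dμ(x)) / (∫ x²·exp((κ+1)·θ₀·x) dμ(x))². Fix κ ∈ ℝ and assume the functions x ↦ x²·exp((2κ+α)·θ₀·x), x ↦ x²·exp((κ+1)·θ₀·x), and x ↦ x²·exp((2−α)·θ₀·x) are μ-integrable with 0 < ∫ x²·exp((2−α)·θ₀·x) dμ and 0 < ∫ x²·exp((κ+1)·θ₀·x) dμ. Then V(κ) ≥ V(1−α) = 1 / ∫ x²·exp((2−α)·θ₀·x) dμ(x). That is, among generalized PML estimators in the one-dimensional uncensored model with heteroskedasticity index α, the asymptotic variance is minimized at κ = 1 − α. -/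
/-!
Cauchy–Schwarz applied to `x ↦ x·exp((2κ+α)θ₀x/2)` and `x ↦ x·exp((2-α)θ₀x/2)`: their product is
`x²·exp((κ+1)θ₀x)`, since the two exponents average to `κ+1`.
-/

open Real MeasureTheory

theorem sq_integral_mul_le_integral_sq_mul_integral_sq {α : Type*} [MeasurableSpace α]
    {μ : Measure α} {f g : α → ℝ} (hf : MemLp f 2 μ) (hg : MemLp g 2 μ) :
    (∫ a, f a * g a ∂μ) ^ 2 ≤ (∫ a, f a ^ 2 ∂μ) * ∫ a, g a ^ 2 ∂μ := by
  have inner_eq : ∀ {u v : α → ℝ} (hu : MemLp u 2 μ) (hv : MemLp v 2 μ),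
      inner ℝ hu.toLp hv.toLp = ∫ a, u a * v a ∂μ := by
    intro u v hu hv
    rw [L2.inner_def]
    refine integral_congr_ae ?_
    filter_upwards [hu.coeFn_toLp, hv.coeFn_toLp] with a hua hva
    rw [hua, hva, Real.inner_apply]
  have := real_inner_mul_inner_self_le hf.toLp hg.toLp
  simpa only [inner_eq, ← sq] using this

theorem sq_integral_sq_mul_exp_midpoint_le (μ : Measure ℝ) (a b : ℝ)
    (ha : Integrable (fun x => x ^ 2 * exp (a * x)) μ)
    (hb : Integrable (fun x => x ^ 2 * exp (b * x)) μ) :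
    (∫ x, x ^ 2 * exp ((a + b) / 2 * x) ∂μ) ^ 2 ≤
      (∫ x, x ^ 2 * exp (a * x) ∂μ) * ∫ x, x ^ 2 * exp (b * x) ∂μ := by
  have sq_eq : ∀ c x : ℝ, (x * exp (c / 2 * x)) ^ 2 = x ^ 2 * exp (c * x) := fun c x => by
    rw [mul_pow, ← exp_nat_mul]; ring_nf
  have memLp : ∀ c, Integrable (fun x => x ^ 2 * exp (c * x)) μ →
      MemLp (fun x => x * exp (c / 2 * x)) 2 μ := fun c hc =>
    (memLp_two_iff_integrable_sq (by fun_prop)).2 (by simpa only [sq_eq] using hc)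
  have mul_eq : ∀ x : ℝ, x * exp (a / 2 * x) * (x * exp (b / 2 * x)) =
      x ^ 2 * exp ((a + b) / 2 * x) := fun x => by
    rw [mul_mul_mul_comm, ← exp_add]; ring_nf
  simpa only [mul_eq, sq_eq] using
    sq_integral_mul_le_integral_sq_mul_integral_sq (memLp a ha) (memLp b hb)

theorem generalized_pml_variance_minimized_general (μ : Measure ℝ) (θ₀ α κ : ℝ)
    (h1 : Integrable (fun x => x ^ 2 * Real.exp ((2 * κ + α) * θ₀ * x)) μ)
    (h3 : Integrable (fun x => x ^ 2 * Real.exp ((2 - α) * θ₀ * x)) μ)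
    (hpos3 : 0 < ∫ x, x ^ 2 * Real.exp ((2 - α) * θ₀ * x) ∂μ)
    (hpos2 : 0 < ∫ x, x ^ 2 * Real.exp ((κ + 1) * θ₀ * x) ∂μ) :
    (∫ x, x ^ 2 * Real.exp ((2 * κ + α) * θ₀ * x) ∂μ)
        / (∫ x, x ^ 2 * Real.exp ((κ + 1) * θ₀ * x) ∂μ) ^ 2
      ≥ 1 / ∫ x, x ^ 2 * Real.exp ((2 - α) * θ₀ * x) ∂μ ∧
    (∫ x, x ^ 2 * Real.exp ((2 * (1 - α) + α) * θ₀ * x) ∂μ)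
        / (∫ x, x ^ 2 * Real.exp (((1 - α) + 1) * θ₀ * x) ∂μ) ^ 2
      = 1 / ∫ x, x ^ 2 * Real.exp ((2 - α) * θ₀ * x) ∂μ := by
  have cauchy_schwarz := sq_integral_sq_mul_exp_midpoint_le μ _ _ h1 h3
  rw [show ((2 * κ + α) * θ₀ + (2 - α) * θ₀) / 2 = (κ + 1) * θ₀ by ring] at cauchy_schwarz
  have optimal_exponents : 2 * (1 - α) + α = 2 - α ∧ (1 - α) + 1 = 2 - α := by
    constructor <;> ring
  constructor
  · rw [ge_iff_le, div_le_div_iff₀ hpos3 (by positivity), one_mul]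
    exact cauchy_schwarz
  · rw [optimal_exponents.1, optimal_exponents.2, sq, ← div_div, div_self hpos3.ne']

/-- In the one-dimensional uncensored model with heteroskedasticity index
`α`, the asymptotic variance of the generalized PML estimator with index `κ`,
`V(κ) = (∫ x² exp ((2κ+α)θ₀x) dμ) / (∫ x² exp ((κ+1)θ₀x) dμ)²`, satisfies
`V(κ) ≥ V(1-α) = 1 / ∫ x² exp ((2-α)θ₀x) dμ`: the variance is minimized at `κ = 1 - α`. -/
theorem generalized_pml_variance_minimized (μ : Measure ℝ) (θ₀ α κ : ℝ)
    (h1 : Integrable (fun x => x ^ 2 * Real.exp ((2 * κ + α) * θ₀ * x)) μ)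
    (h2 : Integrable (fun x => x ^ 2 * Real.exp ((κ + 1) * θ₀ * x)) μ)
    (h3 : Integrable (fun x => x ^ 2 * Real.exp ((2 - α) * θ₀ * x)) μ)
    (hpos3 : 0 < ∫ x, x ^ 2 * Real.exp ((2 - α) * θ₀ * x) ∂μ)
    (hpos2 : 0 < ∫ x, x ^ 2 * Real.exp ((κ + 1) * θ₀ * x) ∂μ) :
    (∫ x, x ^ 2 * Real.exp ((2 * κ + α) * θ₀ * x) ∂μ)
        / (∫ x, x ^ 2 * Real.exp ((κ + 1) * θ₀ * x) ∂μ) ^ 2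
      ≥ 1 / ∫ x, x ^ 2 * Real.exp ((2 - α) * θ₀ * x) ∂μ ∧
    (∫ x, x ^ 2 * Real.exp ((2 * (1 - α) + α) * θ₀ * x) ∂μ)
        / (∫ x, x ^ 2 * Real.exp (((1 - α) + 1) * θ₀ * x) ∂μ) ^ 2
      = 1 / ∫ x, x ^ 2 * Real.exp ((2 - α) * θ₀ * x) ∂μ :=
  generalized_pml_variance_minimized_general μ θ₀ α κ h1 h3 hpos3 hpos2
end

section
/- Let d be a positive integer, Θ ⊂ ℝ^d compact, and κ ∈ [−1,1]. Let (Ω, F, P) be a probability space carrying an i.i.d. sequence (X_i, Y_i), i ∈ ℕ, of ℝ^d × ℝ-valued random vectors with the same distribution as (X, Y). Define ψ(y, x, θ) = (y − exp(θᵀx))·exp(κ·θᵀx)·x. Assume: (i) there is θ̃₀ in the interior of Θ that is the unique solution in Θ of the population moment equation E[ψ(Y, X, θ)] = 0; (ii) there exists an integrable function α(x, y) with sup_{θ ∈ Θ} ‖(y − exp(θᵀx))·exp(κ·θᵀx)·x‖_∞ ≤ α(x, y) almost surely. Then any sequence of measurable estimators θ̂_n taking values in Θ and satisfying (1/n)·∑_{i=1}^n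 ψ(Y_i, X_i, θ̂_n) = 0 for all n converges to θ̃₀ in probability as n → ∞. -/
/-!
Since `ψ` is jointly continuous, `ω ↦ ψ(Y, X, ·)|_Θ` is a random element of the separable Banach
space `C(Θ, ℝ^d)`, integrable thanks to the envelope, so the Banach-space strong law of large
numbers makes the empirical moment function converge to the population one `M` uniformly on `Θ`,
almost surely. On such a sample path `M (θ̂ₙ) → 0`, because the empirical moment vanishes at
`θ̂ₙ`; hence every cluster point of `θ̂ₙ` in the compact `Θ` is a zero of the continuous `M`, i.e.
equals `θ̃₀`. Almost sure convergence implies convergence in probability.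
-/

open MeasureTheory Filter ProbabilityTheory Topology Function

theorem IsCompact.tendsto_of_tendsto_comp_of_unique_preimage {T E ι : Type*}
    [TopologicalSpace T] [TopologicalSpace E] [T2Space E] {K : Set T} (hK : IsCompact K)
    {M : T → E} (hM : ContinuousOn M K) {y : E} {θ₀ : T}
    (huniq : ∀ θ ∈ K, M θ = y → θ = θ₀) {l : Filter ι} {θs : ι → T} (hmem : ∀ᶠ n in l, θs n ∈ K)
    (hlim : Tendsto (M ∘ θs) l (𝓝 y)) : Tendsto θs l (𝓝 θ₀) := by
  refine hK.tendsto_nhds_of_unique_mapClusterPt hmem fun θ hθ hcluster => huniq θ hθ ?_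
  have hMθ : MapClusterPt (M θ) l (M ∘ θs) := hcluster.tendsto_comp' <|
    (hM θ hθ).mono_left (inf_le_inf_left _ (le_principal_iff.2 (mem_map.2 hmem)))
  exact eq_of_nhds_neBot (hMθ.clusterPt.neBot.mono (inf_le_inf_left _ hlim))

theorem TendstoUniformlyOn.tendsto_apply_of_tendsto_diag {ι P E : Type*} [UniformSpace E]
    {F : ι → P → E} {f : P → E} {l : Filter ι} {K : Set P} (hF : TendstoUniformlyOn F f l K)
    {θs : ι → P} (hmem : ∀ᶠ n in l, θs n ∈ K) {y : E}
    (hdiag : Tendsto (fun n => F n (θs n)) l (𝓝 y)) :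
    Tendsto (fun n => f (θs n)) l (𝓝 y) := by
  refine hdiag.congr_uniformity fun U hU => mem_map.2 ?_
  filter_upwards [hF _ (symm_le_uniformity hU), hmem] with n hn hθn using hn _ hθn

section UniformStrongLaw

variable {α P E : Type*} [TopologicalSpace α] [TopologicalSpace P]
  [NormedAddCommGroup E] (f : α → P → E) (K : Set P)

def curryRestrict (hf : Continuous (uncurry f)) : C(α, C(K, E)) :=
  ContinuousMap.curry ⟨fun q : α × K => f q.1 q.2, by fun_prop⟩

@[simp]
theorem curryRestrict_apply (hf : Continuous (uncurry f)) (z : α) (θ : K) :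
    curryRestrict f K hf z θ = f z θ :=
  rfl

variable {Ω : Type*} [MeasurableSpace Ω] {μ : Measure Ω}
  [MeasurableSpace α] [OpensMeasurableSpace α]
  [SecondCountableTopology E] [T2Space P] [SecondCountableTopology P] [CompactSpace K]

theorem integrable_curryRestrict_comp (hf : Continuous (uncurry f)) {Z : Ω → α}
    (hZ : Measurable Z) {g : Ω → ℝ} (hg : Integrable g μ)
    (hbound : ∀ᵐ ω ∂μ, ∀ θ ∈ K, ‖f (Z ω) θ‖ ≤ g ω) :
    Integrable (fun ω => curryRestrict f K hf (Z ω)) μ := by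
  let : MeasurableSpace C(K, E) := borel _
  have : BorelSpace C(K, E) := ⟨rfl⟩
  have hmeas := (curryRestrict f K hf).continuous.measurable.comp hZ
  refine hg.norm.mono' hmeas.aestronglyMeasurable ?_
  filter_upwards [hbound] with ω hω
  exact (ContinuousMap.norm_le _ (norm_nonneg _)).2 fun θ => (hω θ θ.2).trans (Real.le_norm_self _)

variable [NormedSpace ℝ E] [CompleteSpace E]

theorem continuousOn_integral_comp (hf : Continuous (uncurry f)) {Z : Ω → α}
    (hZ : Measurable Z) {g : Ω → ℝ} (hg : Integrable g μ)
    (hbound : ∀ᵐ ω ∂μ, ∀ θ ∈ K, ‖f (Z ω) θ‖ ≤ g ω) :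
    ContinuousOn (fun θ => ∫ ω, f (Z ω) θ ∂μ) K := by
  rw [continuousOn_iff_continuous_domRestrict]
  convert (∫ ω, curryRestrict f K hf (Z ω) ∂μ).continuous using 1
  ext θ
  exact (ContinuousMap.integral_apply (integrable_curryRestrict_comp f K hf hZ hg hbound) θ).symm

theorem strong_law_ae_tendstoUniformlyOn (hf : Continuous (uncurry f)) (Z : ℕ → Ω → α)
    (hZ : Measurable (Z 0)) (hindep : Pairwise ((· ⟂ᵢ[μ] ·) on Z))
    (hident : ∀ i, IdentDistrib (Z i) (Z 0) μ μ)
    {g : Ω → ℝ} (hg : Integrable g μ) (hbound : ∀ᵐ ω ∂μ, ∀ θ ∈ K, ‖f (Z 0 ω) θ‖ ≤ g ω) :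
    ∀ᵐ ω ∂μ, TendstoUniformlyOn
      (fun (n : ℕ) θ => (n : ℝ)⁻¹ • ∑ i ∈ Finset.range n, f (Z i ω) θ)
      (fun θ => ∫ ω, f (Z 0 ω) θ ∂μ) atTop K := by
  let : MeasurableSpace C(K, E) := borel _
  have : BorelSpace C(K, E) := ⟨rfl⟩
  set F := curryRestrict f K hf
  have hF : Measurable F := F.continuous.measurable
  have hint := integrable_curryRestrict_comp f K hf hZ hg hbound
  filter_upwards [strong_law_ae (fun i ω => F (Z i ω)) hint
    (fun i j hij => (hindep hij).comp hF hF) (fun i => (hident i).comp hF)] with ω hω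
  rw [tendstoUniformlyOn_iff_restrict,
    ← tendstoLocallyUniformly_iff_tendstoUniformly_of_compactSpace]
  convert ContinuousMap.tendsto_iff_tendstoLocallyUniformly.1 hω using 1
  · ext n θ
    simp [F]
  · ext θ
    exact (ContinuousMap.integral_apply hint θ).symm

end UniformStrongLaw

theorem generalized_pml_consistency_general (d : ℕ)
    (Θ : Set (Fin d → ℝ)) (hΘ : IsCompact Θ)
    (κ : ℝ)
    {Ω : Type*} [MeasurableSpace Ω] (μ : Measure Ω) [IsProbabilityMeasure μ]
    (X : ℕ → Ω → (Fin d → ℝ)) (Y : ℕ → Ω → ℝ)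
    (hmeas : ∀ i, Measurable (fun ω => (X i ω, Y i ω)))
    (hindep : iIndepFun (fun i ω => (X i ω, Y i ω)) μ)
    (hident : ∀ i, IdentDistrib (fun ω => (X i ω, Y i ω)) (fun ω => (X 0 ω, Y 0 ω)) μ μ)
    (ψ : ℝ → (Fin d → ℝ) → (Fin d → ℝ) → (Fin d → ℝ))
    (hψ : ∀ y x θ, ψ y x θ
      = fun j => (y - Real.exp (∑ k, θ k * x k)) * Real.exp (κ * ∑ k, θ k * x k) * x j)
    (θt : Fin d → ℝ)
    (huniq : ∀ θ ∈ Θ, (∫ ω, ψ (Y 0 ω) (X 0 ω) θ ∂μ) = 0 → θ = θt)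
    (env : (Fin d → ℝ) → ℝ → ℝ)
    (henv_int : Integrable (fun ω => env (X 0 ω) (Y 0 ω)) μ)
    (hdom : ∀ᵐ ω ∂μ, ∀ θ ∈ Θ, ‖ψ (Y 0 ω) (X 0 ω) θ‖ ≤ env (X 0 ω) (Y 0 ω))
    (θhat : ℕ → Ω → (Fin d → ℝ)) (hθhat_meas : ∀ n, Measurable (θhat n))
    (hθhat_mem : ∀ n ω, θhat n ω ∈ Θ)
    (hθhat_zero : ∀ (n : ℕ) (ω : Ω),
      (1 / (n : ℝ)) • ∑ i ∈ Finset.range n, ψ (Y i ω) (X i ω) (θhat n ω) = 0) :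
    TendstoInMeasure μ θhat atTop (fun _ => θt) := by
  have : CompactSpace Θ := isCompact_iff_compactSpace.1 hΘ
  have hψ_cont : Continuous (uncurry fun (z : (Fin d → ℝ) × ℝ) θ => ψ z.2 z.1 θ) := by
    simp only [hψ]
    fun_prop
  have hULLN := strong_law_ae_tendstoUniformlyOn _ Θ hψ_cont _ (hmeas 0)
    (fun i j hij => hindep.indepFun hij) hident henv_int hdom
  have hM := continuousOn_integral_comp _ Θ hψ_cont (hmeas 0) henv_int hdom
  refine tendstoInMeasure_of_tendsto_ae (fun n => (hθhat_meas n).aestronglyMeasurable) ?_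
  filter_upwards [hULLN] with ω hω
  have hmem : ∀ᶠ n in atTop, θhat n ω ∈ Θ := .of_forall (hθhat_mem · ω)
  refine hΘ.tendsto_of_tendsto_comp_of_unique_preimage hM huniq hmem ?_
  refine hω.tendsto_apply_of_tendsto_diag hmem (tendsto_const_nhds.congr fun n => ?_)
  simpa only [one_div] using (hθhat_zero n ω).symm

/-- **consistency of generalized PML estimators.** With `Θ ⊂ ℝ^d` compact,
`κ ∈ [-1,1]`, i.i.d. data `(X_i, Y_i)` distributed as `(X_0, Y_0)`, score
`ψ(y, x, θ) = (y - exp (θᵀx)) exp (κ θᵀx) x`, a unique population root `θ̃₀` in the interior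
of `Θ`, and a uniform integrable envelope `α(x, y)` for the sup-norm of the score on `Θ`,
any sequence of `Θ`-valued estimators solving the empirical estimating equations converges
to `θ̃₀` in probability. -/
theorem generalized_pml_consistency (d : ℕ) (hd : 0 < d)
    (Θ : Set (Fin d → ℝ)) (hΘ : IsCompact Θ)
    (κ : ℝ) (hκ : κ ∈ Set.Icc (-1 : ℝ) 1)
    {Ω : Type*} [MeasurableSpace Ω] (μ : Measure Ω) [IsProbabilityMeasure μ]
    (X : ℕ → Ω → (Fin d → ℝ)) (Y : ℕ → Ω → ℝ)
    (hmeas : ∀ i, Measurable (fun ω => (X i ω, Y i ω)))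
    (hindep : iIndepFun (fun i ω => (X i ω, Y i ω)) μ)
    (hident : ∀ i, IdentDistrib (fun ω => (X i ω, Y i ω)) (fun ω => (X 0 ω, Y 0 ω)) μ μ)
    (ψ : ℝ → (Fin d → ℝ) → (Fin d → ℝ) → (Fin d → ℝ))
    (hψ : ∀ y x θ, ψ y x θ
      = fun j => (y - Real.exp (∑ k, θ k * x k)) * Real.exp (κ * ∑ k, θ k * x k) * x j)
    (θt : Fin d → ℝ) (hθt : θt ∈ interior Θ)
    (hsol : ∫ ω, ψ (Y 0 ω) (X 0 ω) θt ∂μ = 0)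
    (huniq : ∀ θ ∈ Θ, (∫ ω, ψ (Y 0 ω) (X 0 ω) θ ∂μ) = 0 → θ = θt)
    (env : (Fin d → ℝ) → ℝ → ℝ)
    (henv_int : Integrable (fun ω => env (X 0 ω) (Y 0 ω)) μ)
    (hdom : ∀ᵐ ω ∂μ, ∀ θ ∈ Θ, ‖ψ (Y 0 ω) (X 0 ω) θ‖ ≤ env (X 0 ω) (Y 0 ω))
    (θhat : ℕ → Ω → (Fin d → ℝ)) (hθhat_meas : ∀ n, Measurable (θhat n))
    (hθhat_mem : ∀ n ω, θhat n ω ∈ Θ)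
    (hθhat_zero : ∀ (n : ℕ) (ω : Ω),
      (1 / (n : ℝ)) • ∑ i ∈ Finset.range n, ψ (Y i ω) (X i ω) (θhat n ω) = 0) :
    TendstoInMeasure μ θhat atTop (fun _ => θt) :=
  generalized_pml_consistency_general d Θ hΘ κ μ X Y hmeas hindep hident ψ hψ θt huniq env henv_int
    hdom θhat hθhat_meas hθhat_mem hθhat_zero
end
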